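/- arXiv:math/0609189 — 2 statements merged into one kernel-verified Lean document; each statement's English description precedes it below -/
import Mathlib

section
/- More generally, let M be a linear differential operator with constant coefficients acting on functions of x (commuting with ∂_x and ∂_t). If u, v are smooth and satisfy (v_t + u v_x)_x = 0 and Mu = v_x², then m = Mu satisfies m_t + m u_x + (m u)_x = 0. -/
section helpers

variable {E : Type*} [NormedAddCommGroup E] [NormedSpace ℝ E]

lemma hasDerivAt_slice_x {F : ℝ × ℝ → E} (hF : Differentiable ℝ F) (x t : ℝ) :
    HasDerivAt (fun x' => F (x', t)) (fderiv ℝ F (x, t) (1, 0)) x := by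
  have h1 : HasFDerivAt F (fderiv ℝ F (x, t)) (x, t) := (hF (x, t)).hasFDerivAt
  have h2 : HasDerivAt (fun x' : ℝ => (x', t)) ((1 : ℝ), (0 : ℝ)) x := by
    simpa using (hasDerivAt_id x).prodMk (hasDerivAt_const x t)
  exact h1.comp_hasDerivAt x h2

lemma hasDerivAt_slice_t {F : ℝ × ℝ → E} (hF : Differentiable ℝ F) (x t : ℝ) :
    HasDerivAt (fun t' => F (x, t')) (fderiv ℝ F (x, t) (0, 1)) t := by
  have h1 : HasFDerivAt F (fderiv ℝ F (x, t)) (x, t) := (hF (x, t)).hasFDerivAt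
  have h2 : HasDerivAt (fun t' : ℝ => (x, t')) ((0 : ℝ), (1 : ℝ)) t := by
    simpa using (hasDerivAt_const t x).prodMk (hasDerivAt_id t)
  exact h1.comp_hasDerivAt t h2

lemma hasDerivAt_slice_x_apply {F : ℝ × ℝ → (ℝ × ℝ) →L[ℝ] ℝ} (hF : Differentiable ℝ F)
    (x t : ℝ) (w : ℝ × ℝ) :
    HasDerivAt (fun x' => F (x', t) w) (fderiv ℝ F (x, t) (1, 0) w) x := by
  simpa using (hasDerivAt_slice_x hF x t).clm_apply (hasDerivAt_const x w)

lemma hasDerivAt_slice_t_apply {F : ℝ × ℝ → (ℝ × ℝ) →L[ℝ] ℝ} (hF : Differentiable ℝ F)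
    (x t : ℝ) (w : ℝ × ℝ) :
    HasDerivAt (fun t' => F (x, t') w) (fderiv ℝ F (x, t) (0, 1) w) t := by
  simpa using (hasDerivAt_slice_t hF x t).clm_apply (hasDerivAt_const t w)

end helpers

/-- Partial derivative in the first (spatial) variable. -/
noncomputable def pdx (f : ℝ → ℝ → ℝ) : ℝ → ℝ → ℝ :=
  fun x t => deriv (fun x' => f x' t) x

/-- Partial derivative in the second (time) variable. -/
noncomputable def pdt (f : ℝ → ℝ → ℝ) : ℝ → ℝ → ℝ :=
  fun x t => deriv (fun t' => f x t') t

/-- Generalized version: let `M` be a linear operator on functions of `x`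
commuting with `∂_x` and `∂_t`. If smooth `u, v` satisfy `(v_t + u v_x)_x = 0`
and `Mu = v_x²`, then `m = Mu` satisfies `m_t + m u_x + (m u)_x = 0`. -/
theorem generalized_hunter_saxton_from_twist_system
    (M : (ℝ → ℝ) →ₗ[ℝ] (ℝ → ℝ))
    (hMx : ∀ f : ℝ → ℝ, M (deriv f) = deriv (M f))
    (u v m : ℝ → ℝ → ℝ)
    (hu : ContDiff ℝ (⊤ : ℕ∞) ↿u) (hv : ContDiff ℝ (⊤ : ℕ∞) ↿v) (hm : ContDiff ℝ (⊤ : ℕ∞) ↿m)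
    (hMu : ∀ t, (fun x => m x t) = M (fun x => u x t))
    (hMt : ∀ x t, pdt m x t = M (fun x' => pdt u x' t) x)
    (h1 : ∀ x t, pdx (fun x' t' => pdt v x' t' + u x' t' * pdx v x' t') x t = 0)
    (h2 : ∀ x t, m x t = (pdx v x t) ^ 2) :
    ∀ x t, pdt m x t + m x t * pdx u x t
        + pdx (fun x' t' => m x' t' * u x' t') x t = 0 := by
  intro x t
  have hvd : Differentiable ℝ ↿v := hv.differentiable (by simp)
  have hud : Differentiable ℝ ↿u := hu.differentiable (by simp)
  set A : ℝ × ℝ → (ℝ × ℝ) →L[ℝ] ℝ := fderiv ℝ ↿v with hA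
  have hAd : Differentiable ℝ A :=
    (hv.fderiv_right (m := (⊤ : ℕ∞)) (by simp)).differentiable (by simp)
  set A2 := fderiv ℝ A (x, t) with hA2
  -- pdx v as application of A
  have hpdxv : ∀ x' t' : ℝ, pdx v x' t' = A (x', t') (1, 0) := fun x' t' =>
    (hasDerivAt_slice_x hvd x' t').deriv
  have hpdtv : ∀ x' t' : ℝ, pdt v x' t' = A (x', t') (0, 1) := fun x' t' =>
    (hasDerivAt_slice_t hvd x' t').deriv
  -- abbreviations
  set vx := A (x, t) (1, 0) with hvx
  set vxx := A2 (1, 0) (1, 0) with hvxx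
  set vxt := A2 (1, 0) (0, 1) with hvxt
  set ux := fderiv ℝ ↿u (x, t) (1, 0) with hux
  have hpdxu : pdx u x t = ux := (hasDerivAt_slice_x hud x t).deriv
  -- symmetry of second derivative
  have hsymm : A2 (0, 1) (1, 0) = vxt :=
    second_derivative_symmetric (fun y => (hvd y).hasFDerivAt)
      (hAd (x, t)).hasFDerivAt (0, 1) (1, 0)
  -- derivative of u-slice
  have hux' : HasDerivAt (fun x' => u x' t) ux x := hasDerivAt_slice_x hud x t
  -- derivative of x-slice of pdx v, pdt v
  have hvx_x : HasDerivAt (fun x' => pdx v x' t) vxx x := by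
    have h := hasDerivAt_slice_x_apply hAd x t ((1 : ℝ), (0 : ℝ))
    have he : (fun x' => pdx v x' t) = fun x' => A (x', t) (1, 0) := by
      funext x'; exact hpdxv x' t
    rw [he]; exact h
  have hvt_x : HasDerivAt (fun x' => pdt v x' t) vxt x := by
    have h := hasDerivAt_slice_x_apply hAd x t ((0 : ℝ), (1 : ℝ))
    have he : (fun x' => pdt v x' t) = fun x' => A (x', t) (0, 1) := by
      funext x'; exact hpdtv x' t
    rw [he]; exact h
  -- h1 expanded: vxt + ux * vx + u * vxx = 0
  have hmul : HasDerivAt (fun x' => u x' t * pdx v x' t) (ux * vx + u x t * vxx) x := by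
    have h := hux'.mul hvx_x
    rwa [hpdxv x t] at h
  have key1 : vxt + (ux * vx + u x t * vxx) = 0 := by
    rw [← h1 x t]; exact (hvt_x.add hmul).deriv.symm
  -- pdt m = 2 vx * vxt  (using symmetry)
  have hmt : pdt m x t = 2 * vx * vxt := by
    have hD : HasDerivAt (fun t' => A (x, t') (1, 0)) (A2 (0, 1) (1, 0)) t :=
      hasDerivAt_slice_t_apply hAd x t ((1 : ℝ), (0 : ℝ))
    have hD2 : HasDerivAt (fun t' => m x t') (2 * vx * vxt) t := by
      have he : (fun t' => m x t') = fun t' => (A (x, t') (1, 0)) ^ 2 := by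
        funext t'; rw [h2 x t', hpdxv]
      rw [he]
      have := hD.fun_pow 2
      rw [hsymm] at this
      exact this.congr_deriv (by rw [hvx]; ring)
    exact hD2.deriv
  -- pdx m = 2 vx * vxx
  have hmx : HasDerivAt (fun x' => m x' t) (2 * vx * vxx) x := by
    have hD : HasDerivAt (fun x' => A (x', t) (1, 0)) vxx x :=
      hasDerivAt_slice_x_apply hAd x t ((1 : ℝ), (0 : ℝ))
    have he : (fun x' => m x' t) = fun x' => (A (x', t) (1, 0)) ^ 2 := by
      funext x'; rw [h2 x' t, hpdxv]
    rw [he]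
    have := hD.fun_pow 2
    exact this.congr_deriv (by rw [hvx]; ring)
  -- pdx (m u)
  have hmux : pdx (fun x' t' => m x' t' * u x' t') x t
      = 2 * vx * vxx * u x t + m x t * ux := (hmx.mul hux').deriv
  have hm2 : m x t = vx ^ 2 := by rw [h2 x t, hpdxv]
  rw [hmt, hmux, hm2, hpdxu]
  linear_combination (2 * vx) * key1
end

section
/- Suppose u, v are smooth and spatially periodic with period L, satisfying (v_t + Λ u v_θ)_θ + M⟨v_θ²⟩v = 0 and u_{θθ} = v_θ² − ⟨v_θ²⟩, where ⟨f⟩ = (1/L)∫₀^L f dθ and Λ, M are constants. Then d/dt ⟨v_θ²⟩ = 0, i.e., the mean wave momentum ⟨v_θ²⟩ is constant in time. -/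
section aux
variable {f : ℝ → ℝ → ℝ}

lemma slice_x (hf : ContDiff ℝ (⊤ : ℕ∞) ↿f) (t : ℝ) : ContDiff ℝ (⊤ : ℕ∞) (fun x => f x t) :=
  hf.comp (contDiff_id.prodMk contDiff_const)

lemma slice_t (hf : ContDiff ℝ (⊤ : ℕ∞) ↿f) (x : ℝ) : ContDiff ℝ (⊤ : ℕ∞) (fun t => f x t) :=
  hf.comp (contDiff_const.prodMk contDiff_id)

lemma hasDerivAt_pdx (hf : ContDiff ℝ (⊤ : ℕ∞) ↿f) (x t : ℝ) :
    HasDerivAt (fun x' => f x' t) (pdx f x t) x :=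
  (((slice_x hf t).differentiable (by simp)) x).hasDerivAt

lemma hasDerivAt_pdt (hf : ContDiff ℝ (⊤ : ℕ∞) ↿f) (x t : ℝ) :
    HasDerivAt (fun t' => f x t') (pdt f x t) t :=
  (((slice_t hf x).differentiable (by simp)) t).hasDerivAt

lemma pdx_eq (hf : ContDiff ℝ (⊤ : ℕ∞) ↿f) (x t : ℝ) :
    pdx f x t = fderiv ℝ ↿f (x, t) (1, 0) := by
  have h1 : HasDerivAt (fun x' => f x' t) (fderiv ℝ ↿f (x, t) (1, 0)) x :=
    (hf.differentiable (by simp) (x, t)).hasFDerivAt.comp_hasDerivAt (f := fun x' => (x', t)) x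
      ((hasDerivAt_id' x).prodMk (hasDerivAt_const x t))
  simpa only [pdx, Function.comp_def, Function.uncurry_apply_pair] using h1.deriv

lemma pdt_eq (hf : ContDiff ℝ (⊤ : ℕ∞) ↿f) (x t : ℝ) :
    pdt f x t = fderiv ℝ ↿f (x, t) (0, 1) := by
  have h1 : HasDerivAt (fun t' => f x t') (fderiv ℝ ↿f (x, t) (0, 1)) t :=
    (hf.differentiable (by simp) (x, t)).hasFDerivAt.comp_hasDerivAt t
      ((hasDerivAt_const t x).prodMk (hasDerivAt_id t))
  simpa only [pdt, Function.comp_def, Function.uncurry_apply_pair] using h1.deriv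

lemma contDiff_pdx (hf : ContDiff ℝ (⊤ : ℕ∞) ↿f) : ContDiff ℝ (⊤ : ℕ∞) ↿(pdx f) := by
  have h : ↿(pdx f) = fun p : ℝ × ℝ => fderiv ℝ ↿f p (1, 0) :=
    funext fun p => pdx_eq hf p.1 p.2
  rw [h]
  exact (hf.fderiv_right (by simp)).clm_apply contDiff_const

lemma contDiff_pdt (hf : ContDiff ℝ (⊤ : ℕ∞) ↿f) : ContDiff ℝ (⊤ : ℕ∞) ↿(pdt f) := by
  have h : ↿(pdt f) = fun p : ℝ × ℝ => fderiv ℝ ↿f p (0, 1) :=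
    funext fun p => pdt_eq hf p.1 p.2
  rw [h]
  exact (hf.fderiv_right (by simp)).clm_apply contDiff_const

lemma clairaut (hf : ContDiff ℝ (⊤ : ℕ∞) ↿f) (x t : ℝ) :
    pdt (pdx f) x t = pdx (pdt f) x t := by
  set F' := fderiv ℝ ↿f with hF'def
  have hF' : ContDiff ℝ (⊤ : ℕ∞) F' := hf.fderiv_right (by simp)
  set F'' := fderiv ℝ F' (x, t) with hF''def
  have hd : ∀ y, HasFDerivAt ↿f (F' y) y := fun y => (hf.differentiable (by simp) y).hasFDerivAt
  have hd2 : HasFDerivAt F' F'' (x, t) := (hF'.differentiable (by simp) (x, t)).hasFDerivAt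
  have sym := second_derivative_symmetric hd hd2 ((1 : ℝ), (0 : ℝ)) ((0 : ℝ), (1 : ℝ))
  have e1 : HasDerivAt (fun t' => pdx f x t') (F'' (0, 1) (1, 0)) t := by
    have hfun : (fun t' => pdx f x t') = fun t' => F' (x, t') (1, 0) :=
      funext fun t' => pdx_eq hf x t'
    rw [hfun]
    have hc : HasDerivAt (fun t' => F' (x, t')) (F'' (0, 1)) t :=
      hd2.comp_hasDerivAt t ((hasDerivAt_const t x).prodMk (hasDerivAt_id t))
    have h := hc.clm_apply (hasDerivAt_const t ((1 : ℝ), (0 : ℝ)))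
    simpa using h
  have e2 : HasDerivAt (fun x' => pdt f x' t) (F'' (1, 0) (0, 1)) x := by
    have hfun : (fun x' => pdt f x' t) = fun x' => F' (x', t) (0, 1) :=
      funext fun x' => pdt_eq hf x' t
    rw [hfun]
    have hc : HasDerivAt (fun x' => F' (x', t)) (F'' (1, 0)) x :=
      hd2.comp_hasDerivAt x ((hasDerivAt_id x).prodMk (hasDerivAt_const x t))
    have h := hc.clm_apply (hasDerivAt_const x ((0 : ℝ), (1 : ℝ)))
    simpa using h
  have l1 : pdt (pdx f) x t = F'' (0, 1) (1, 0) := e1.deriv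
  have l2 : pdx (pdt f) x t = F'' (1, 0) (0, 1) := e2.deriv
  rw [l1, l2, sym]

lemma pdx_per {L : ℝ} (hper : ∀ x t, f (x + L) t = f x t) (x t : ℝ) :
    pdx f (x + L) t = pdx f x t := by
  have h : (fun y => f (y + L) t) = fun y => f y t := funext fun y => hper y t
  calc deriv (fun x' => f x' t) (x + L)
      = deriv (fun y => f (y + L) t) x := (deriv_comp_add_const _ L x).symm
    _ = deriv (fun y => f y t) x := by rw [h]

end aux

open MeasureTheory Set

/-- Conservation of the mean wave momentum `⟨v_θ²⟩` for the periodic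
twist-wave system `(v_t + Λ u v_θ)_θ + M⟨v_θ²⟩v = 0`,
`u_θθ = v_θ² − ⟨v_θ²⟩`, where `⟨f⟩ = (1/L)∫₀^L f dθ`. -/
theorem mean_momentum_conserved
    (L Λ M : ℝ) (hL : 0 < L) (u v : ℝ → ℝ → ℝ)
    (hu : ContDiff ℝ (⊤ : ℕ∞) ↿u) (hv : ContDiff ℝ (⊤ : ℕ∞) ↿v)
    (huper : ∀ θ t, u (θ + L) t = u θ t)
    (hvper : ∀ θ t, v (θ + L) t = v θ t) :
    let avg : ℝ → ℝ := fun t => (1 / L) * ∫ θ in (0 : ℝ)..L, (pdx v θ t) ^ 2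
    (∀ θ t, pdx (fun θ' t' =>
        pdt v θ' t' + Λ * u θ' t' * pdx v θ' t') θ t
        + M * avg t * v θ t = 0) →
    (∀ θ t, pdx (pdx u) θ t = (pdx v θ t) ^ 2 - avg t) →
    ∀ t, deriv avg t = 0 := by
  intro avg hPDE1 hPDE2 t₀
  have hvx : ContDiff ℝ (⊤ : ℕ∞) ↿(pdx v) := contDiff_pdx hv
  have hP : ContDiff ℝ (⊤ : ℕ∞) ↿(fun θ t => (pdx v θ t) ^ 2) := by
    have h : ↿(fun θ t => (pdx v θ t) ^ 2) = fun p : ℝ × ℝ => (Function.uncurry (pdx v) p) ^ 2 := rfl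
    rw [h]; exact hvx.pow 2
  have hQ : ContDiff ℝ (⊤ : ℕ∞) ↿(pdt (fun θ t => (pdx v θ t) ^ 2)) := contDiff_pdt hP
  -- bound for dominated differentiation
  obtain ⟨C, hC⟩ := (isCompact_uIcc (a := (0:ℝ)) (b := L)).prod
    (isCompact_closedBall t₀ 1) |>.exists_bound_of_continuousOn
    hQ.continuous.continuousOn
  -- differentiate under the integral sign
  have key := (intervalIntegral.hasDerivAt_integral_of_dominated_loc_of_deriv_le
      (F := fun t θ => (pdx v θ t) ^ 2)
      (F' := fun t θ => pdt (fun θ t => (pdx v θ t) ^ 2) θ t)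
      (x₀ := t₀) (a := (0:ℝ)) (b := L) (bound := fun _ => C) (μ := volume)
      (Metric.ball_mem_nhds t₀ one_pos)
      (Filter.Eventually.of_forall fun t =>
        ((slice_x hP t).continuous.aestronglyMeasurable))
      ((slice_x hP t₀).continuous.intervalIntegrable 0 L)
      ((slice_x hQ t₀).continuous.aestronglyMeasurable)
      (Filter.Eventually.of_forall fun θ hθ t ht =>
        hC (θ, t) ⟨uIoc_subset_uIcc hθ, Metric.ball_subset_closedBall ht⟩)
      (intervalIntegrable_const)
      (Filter.Eventually.of_forall fun θ _ t _ => hasDerivAt_pdt hP θ t)).2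
  have havg : HasDerivAt avg
      ((1 / L) * ∫ θ in (0:ℝ)..L, pdt (fun θ t => (pdx v θ t) ^ 2) θ t₀) t₀ :=
    HasDerivAt.const_mul (1 / L) key
  -- set the conserved constant
  obtain ⟨c, hc⟩ : ∃ c, avg t₀ = c := ⟨_, rfl⟩
  -- the flux function
  set F : ℝ → ℝ := fun θ =>
    Λ * (u θ t₀ * (pdx v θ t₀) ^ 2 + (pdx u θ t₀) ^ 2 / 2 + c * u θ t₀)
      + M * c * (v θ t₀) ^ 2 with hFdef
  have hFderiv : ∀ θ : ℝ,
      HasDerivAt F (-(pdt (fun θ t => (pdx v θ t) ^ 2) θ t₀)) θ := by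
    intro θ
    have hu1 := hasDerivAt_pdx hu θ t₀
    have hu2 := hasDerivAt_pdx (contDiff_pdx hu) θ t₀
    have hv1 := hasDerivAt_pdx hv θ t₀
    have hv2 := hasDerivAt_pdx (contDiff_pdx hv) θ t₀
    have hv3 := hasDerivAt_pdx (contDiff_pdt hv) θ t₀
    -- expand the first PDE
    have hsum : HasDerivAt (fun x => pdt v x t₀ + Λ * u x t₀ * pdx v x t₀)
        (pdx (pdt v) θ t₀ +
          (Λ * pdx u θ t₀ * pdx v θ t₀ + Λ * u θ t₀ * pdx (pdx v) θ t₀)) θ :=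
      hv3.add ((hu1.const_mul Λ).mul hv2)
    have hE : pdx (fun θ' t' => pdt v θ' t' + Λ * u θ' t' * pdx v θ' t') θ t₀ =
        pdx (pdt v) θ t₀ +
          (Λ * pdx u θ t₀ * pdx v θ t₀ + Λ * u θ t₀ * pdx (pdx v) θ t₀) := hsum.deriv
    have hpde := hPDE1 θ t₀
    rw [hc, hE] at hpde
    have hz : pdx (pdt v) θ t₀ =
        -(M * c * v θ t₀) - (Λ * pdx u θ t₀ * pdx v θ t₀ + Λ * u θ t₀ * pdx (pdx v) θ t₀) := by
      linarith
    have ha2 : pdx (pdx u) θ t₀ = (pdx v θ t₀) ^ 2 - c := by rw [hPDE2 θ t₀, hc]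
    -- time derivative of vθ²
    have hQval := (hasDerivAt_pdt hvx θ t₀).pow 2
    have hQeq : pdt (fun θ t => (pdx v θ t) ^ 2) θ t₀ =
        2 * pdx v θ t₀ * pdt (pdx v) θ t₀ := by have h := hQval.deriv; simp [Pi.pow_def] at h; exact h
    have hcl : pdt (pdx v) θ t₀ = pdx (pdt v) θ t₀ := clairaut hv θ t₀
    -- derivative of F
    have hF : HasDerivAt F
        (Λ * ((pdx u θ t₀ * (pdx v θ t₀) ^ 2
              + u θ t₀ * (2 * pdx v θ t₀ ^ 1 * pdx (pdx v) θ t₀))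
            + (2 * pdx u θ t₀ ^ 1 * pdx (pdx u) θ t₀) / 2 + c * pdx u θ t₀)
          + M * c * (2 * v θ t₀ ^ 1 * pdx v θ t₀)) θ :=
      ((((hu1.mul (hv2.pow 2)).add ((hu2.pow 2).div_const 2)).add
        (hu1.const_mul c)).const_mul Λ).add ((hv1.pow 2).const_mul (M * c))
    convert hF using 1
    rw [hQeq, hcl, hz, ha2]
    ring
  -- continuity of the integrand
  have hQcont : Continuous fun θ => pdt (fun θ t => (pdx v θ t) ^ 2) θ t₀ :=
    (slice_x hQ t₀).continuous
  have hint : (∫ θ in (0:ℝ)..L, -(pdt (fun θ t => (pdx v θ t) ^ 2) θ t₀)) = F L - F 0 :=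
    intervalIntegral.integral_eq_sub_of_hasDerivAt (fun θ _ => hFderiv θ)
      ((hQcont.neg).intervalIntegrable 0 L)
  have hUL : u L t₀ = u 0 t₀ := by have := huper 0 t₀; rwa [zero_add] at this
  have hUxL : pdx u L t₀ = pdx u 0 t₀ := by
    have := pdx_per huper 0 t₀; rwa [zero_add] at this
  have hVL : v L t₀ = v 0 t₀ := by have := hvper 0 t₀; rwa [zero_add] at this
  have hVxL : pdx v L t₀ = pdx v 0 t₀ := by
    have := pdx_per hvper 0 t₀; rwa [zero_add] at this
  have hFLF0 : F L = F 0 := by rw [hFdef]; simp only; rw [hUL, hUxL, hVL, hVxL]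
  rw [hFLF0, sub_self, intervalIntegral.integral_neg, neg_eq_zero] at hint
  rw [havg.deriv, hint, mul_zero]
end
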